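/- arXiv:2311.10265 — 2 statements merged into one kernel-verified Lean document; each statement's English description precedes it below -/
import Mathlib

section
/- Let g ∈ SL_d(R) with σ₁(g) > σ₂(g), and let τ be a probability measure on P(R^d) satisfying the Hölder regularity condition: there exist C, β > 0 with τ(B(W, R)) ≤ C·R^β for every R ≥ 0 and every projective hyperplane W. Then for any 0 < r ≤ 1/2, writing θ = τ(b(g⁻, r)^c), the decomposition g·τ = θ·g(τ restricted-normalized to b(g⁻,r)^c) + (1−θ)·g(τ restricted-normalized to b(g⁻,r)) satisfies θ ≤ C·r^β and diam(supp of g(τ restricted to b(g⁻,r))) ≤ diam B(g⁺, (σ₂(g)/σ₁(g))/r²). -/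
/- STATEMENT 13: Let g ∈ SL_d(ℝ) with σ₁(g) > σ₂(g) (given via a Cartan
decomposition g = k' ∘ diag(a) ∘ k) and let τ be a probability measure on P(ℝ^d)
satisfying τ(B(W,R)) ≤ C·R^β for every R ≥ 0 and projective hyperplane W.  For
0 < r ≤ 1/2, writing θ = τ(b(g⁻,r)ᶜ), the r-attracting decomposition
g·τ = θ·g(τ_{b(g⁻,r)ᶜ}) + (1−θ)·g(τ_{b(g⁻,r)}) satisfies θ ≤ C·r^β and the support
of the attracting part has projective diameter at most diam B(g⁺, (σ₂/σ₁)/r²).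
P(ℝ^d) is modeled by the unit sphere of ℝ^d, with the projective metric `projDist`. -/

open MeasureTheory Metric
open scoped RealInnerProductSpace ENNReal
noncomputable section

/-- Projective distance `d(ℝv, ℝw) = ‖v ∧ w‖ / (‖v‖ ‖w‖)`. -/
def projDist {d : ℕ} (v w : EuclideanSpace ℝ (Fin d)) : ℝ :=
  Real.sqrt (‖v‖ ^ 2 * ‖w‖ ^ 2 - ⟪v, w⟫ ^ 2) / (‖v‖ * ‖w‖)

/-- Distance from the projective point `ℝv` to the projective hyperplane with
normal vector `u`. -/
def distToHyp {d : ℕ} (v u : EuclideanSpace ℝ (Fin d)) : ℝ :=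
  |⟪v, u⟫| / (‖v‖ * ‖u‖)

/-- The diagonal map with entries `a`. -/
def diagMap {d : ℕ} (a : Fin d → ℝ) (v : EuclideanSpace ℝ (Fin d)) :
    EuclideanSpace ℝ (Fin d) :=
  (WithLp.equiv 2 (Fin d → ℝ)).symm (fun i => a i * v i)

/-- The projective action of an invertible linear map on the unit sphere. -/
def pact {d : ℕ} (g : EuclideanSpace ℝ (Fin d) ≃ₗ[ℝ] EuclideanSpace ℝ (Fin d))
    (x : sphere (0 : EuclideanSpace ℝ (Fin d)) 1) :
    sphere (0 : EuclideanSpace ℝ (Fin d)) 1 :=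
  ⟨‖g (x : EuclideanSpace ℝ (Fin d))‖⁻¹ • g (x : EuclideanSpace ℝ (Fin d)), by
    have hx : ‖(x : EuclideanSpace ℝ (Fin d))‖ = 1 := mem_sphere_zero_iff_norm.mp x.2
    have hx0 : (x : EuclideanSpace ℝ (Fin d)) ≠ 0 := by
      intro h0; rw [h0, norm_zero] at hx; exact one_ne_zero hx.symm
    have hg0 : g (x : EuclideanSpace ℝ (Fin d)) ≠ 0 := by
      intro h0; exact hx0 (g.map_eq_zero_iff.mp h0)
    rw [mem_sphere_zero_iff_norm, norm_smul, norm_inv, norm_norm]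
    exact inv_mul_cancel₀ (norm_ne_zero_iff.mpr hg0)⟩

/-- The support of a measure: points all of whose open neighborhoods have
positive measure. -/
def msupp {α : Type*} [TopologicalSpace α] [MeasurableSpace α]
    (μ : Measure α) : Set α :=
  {x | ∀ U : Set α, IsOpen U → x ∈ U → 0 < μ U}

/-- Diameter of a set of projective points (unit vectors) with respect to the
projective distance. -/
def pdiam {d : ℕ} (S : Set (sphere (0 : EuclideanSpace ℝ (Fin d)) 1)) : ℝ :=
  sSup {t : ℝ | ∃ x ∈ S, ∃ y ∈ S,
    t = projDist (x : EuclideanSpace ℝ (Fin d)) (y : EuclideanSpace ℝ (Fin d))}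

/-! Write `g = k' ∘ diag(a) ∘ k`. The bound on `θ` is the Hölder hypothesis for the repelling
hyperplane `(k⁻¹ e₀)^⊥`. A unit vector at distance `> r` from that hyperplane has first
coordinate of modulus `> r` after `k`, and `diag(a)` then brings it within `a₁ / (a₀ r)` of the
axis `e₀`, since the other coordinates are stretched by at most `a₁`. So the attracting part is
carried by the closed ball of radius `a₁ / (a₀ r) ≤ (a₁ / a₀) / r²` around `g⁺ = k' e₀`, which
therefore contains its support. -/

section ProjectiveDistance

variable {d : ℕ}

local notation "E" => EuclideanSpace ℝ (Fin d)

lemma projDist_nonneg (v w : E) : 0 ≤ projDist v w := by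
  unfold projDist; positivity

lemma projDist_le_one (v w : E) : projDist v w ≤ 1 := by
  refine div_le_one_of_le₀ ?_ (by positivity)
  calc Real.sqrt (‖v‖ ^ 2 * ‖w‖ ^ 2 - ⟪v, w⟫ ^ 2)
      ≤ Real.sqrt ((‖v‖ * ‖w‖) ^ 2) := Real.sqrt_le_sqrt (by nlinarith [sq_nonneg ⟪v, w⟫])
    _ = ‖v‖ * ‖w‖ := Real.sqrt_sq (by positivity)

lemma projDist_smul_left {c : ℝ} (hc : 0 < c) (v w : E) :
    projDist (c • v) w = projDist v w := by
  rw [projDist, projDist, norm_smul, real_inner_smul_left, Real.norm_of_nonneg hc.le,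
    show (c * ‖v‖) ^ 2 * ‖w‖ ^ 2 - (c * ⟪v, w⟫) ^ 2 = c ^ 2 * (‖v‖ ^ 2 * ‖w‖ ^ 2 - ⟪v, w⟫ ^ 2)
      by ring,
    Real.sqrt_mul (sq_nonneg c), Real.sqrt_sq hc.le, mul_assoc, mul_div_mul_left _ _ hc.ne']

lemma projDist_map_linearIsometryEquiv (f : E ≃ₗᵢ[ℝ] E) (v w : E) :
    projDist (f v) (f w) = projDist v w := by
  rw [projDist, projDist, f.norm_map, f.norm_map, f.inner_map_map]

lemma continuous_projDist_left {w : E} (hw : w ≠ 0) :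
    Continuous fun x : sphere (0 : E) 1 => projDist x.1 w := by
  unfold projDist
  refine Continuous.div (by fun_prop) (by fun_prop) fun x => ?_
  rw [norm_eq_of_mem_sphere x, one_mul]
  exact norm_ne_zero_iff.mpr hw

lemma distToHyp_symm_single (k : E ≃ₗᵢ[ℝ] E) (i : Fin d) {v : E} (hv : ‖v‖ = 1) :
    distToHyp v (k.symm (EuclideanSpace.single i 1)) = |k v i| := by
  rw [distToHyp, ← k.inner_map_map, k.apply_symm_apply, EuclideanSpace.inner_single_right,
    LinearIsometryEquiv.norm_map, hv]
  simp

end ProjectiveDistance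

section ProjectiveAction

variable {d : ℕ}

local notation "E" => EuclideanSpace ℝ (Fin d)

lemma apply_ne_zero_of_mem_sphere (g : E ≃ₗ[ℝ] E) (x : sphere (0 : E) 1) : g x ≠ 0 :=
  g.map_ne_zero_iff.mpr (ne_zero_of_mem_unit_sphere x)

lemma continuous_pact (g : E ≃ₗ[ℝ] E) : Continuous (pact g) := by
  have hg : Continuous g := LinearMap.continuous_of_finiteDimensional (g : E →ₗ[ℝ] E)
  have hgx : Continuous fun x : sphere (0 : E) 1 => g x := hg.comp continuous_subtype_val
  exact ((hgx.norm.inv₀ fun x => norm_ne_zero_iff.mpr (apply_ne_zero_of_mem_sphere g x)).smul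
    hgx).subtype_mk _

lemma projDist_pact_left (g : E ≃ₗ[ℝ] E) (x : sphere (0 : E) 1) (w : E) :
    projDist (pact g x : E) w = projDist (g x) w :=
  projDist_smul_left (inv_pos.mpr (norm_pos_iff.mpr (apply_ne_zero_of_mem_sphere g x))) _ _

end ProjectiveAction

section Diameter

variable {d : ℕ}

lemma pdiam_nonneg (S : Set (sphere (0 : EuclideanSpace ℝ (Fin d)) 1)) : 0 ≤ pdiam S :=
  Real.sSup_nonneg fun _ ⟨_, _, _, _, ht⟩ => ht ▸ projDist_nonneg _ _

lemma pdiam_mono {S T : Set (sphere (0 : EuclideanSpace ℝ (Fin d)) 1)} (hST : S ⊆ T) :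
    pdiam S ≤ pdiam T := by
  rcases S.eq_empty_or_nonempty with rfl | ⟨x, hx⟩
  · simpa [pdiam] using pdiam_nonneg T
  refine csSup_le_csSup ⟨1, ?_⟩ ⟨_, x, hx, x, hx, rfl⟩ ?_
  · rintro _ ⟨y, -, z, -, rfl⟩
    exact projDist_le_one _ _
  · rintro _ ⟨y, hy, z, hz, rfl⟩
    exact ⟨y, hST hy, z, hST hz, rfl⟩

end Diameter

section Support

variable {α β : Type*} [MeasurableSpace α] [TopologicalSpace β] [MeasurableSpace β]

lemma msupp_subset_of_isClosed {μ : Measure β} {T : Set β} (hT : IsClosed T) (h : μ Tᶜ = 0) :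
    msupp μ ⊆ T := fun _ hx => by_contra fun hxT => (hx _ hT.isOpen_compl hxT).ne' h

lemma msupp_smul_map_restrict_subset [OpensMeasurableSpace β] {f : α → β} (hf : Measurable f)
    (c : ℝ≥0∞) (μ : Measure α) {s : Set α} {T : Set β} (hT : IsClosed T)
    (hfs : Set.MapsTo f s T) : msupp (c • (μ.restrict s).map f) ⊆ T := by
  refine msupp_subset_of_isClosed hT ?_
  have hTc : MeasurableSet Tᶜ := hT.measurableSet.compl
  rw [Measure.smul_apply, Measure.map_apply hf hTc,
    Measure.restrict_apply (hf hTc), Set.disjoint_iff_inter_eq_empty.mp, measure_empty, smul_zero]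
  exact Set.disjoint_left.mpr fun _ hxT hxs => hxT (hfs hxs)

end Support

section Diagonal

variable {d : ℕ}

local notation "E" => EuclideanSpace ℝ (Fin d)

lemma diagMap_apply (a : Fin d → ℝ) (v : E) (i : Fin d) : diagMap a v i = a i * v i := rfl

lemma inner_diagMap_single (a : Fin d → ℝ) (v : E) (i : Fin d) :
    ⟪diagMap a v, EuclideanSpace.single i 1⟫ = a i * v i := by
  simp [EuclideanSpace.inner_single_right, diagMap_apply]

lemma norm_sq_diagMap (a : Fin d → ℝ) (v : E) : ‖diagMap a v‖ ^ 2 = ∑ i, (a i * v i) ^ 2 := by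
  simp only [EuclideanSpace.real_norm_sq_eq, diagMap_apply]

lemma norm_sq_diagMap_sub_le (hd : 1 < d) {a : Fin d → ℝ} (ha : ∀ i, 0 ≤ a i)
    (hmono : Antitone a) (v : E) :
    ‖diagMap a v‖ ^ 2 - (a ⟨0, by omega⟩ * v ⟨0, by omega⟩) ^ 2 ≤ a ⟨1, by omega⟩ ^ 2 * ‖v‖ ^ 2 := by
  set i₀ : Fin d := ⟨0, by omega⟩
  have hsplit := Finset.sum_erase_add _ (fun i => (a i * v i) ^ 2) (Finset.mem_univ i₀)
  have htail :
      ∑ i ∈ Finset.univ.erase i₀, (a i * v i) ^ 2 ≤ ∑ i, a ⟨1, by omega⟩ ^ 2 * v i ^ 2 := by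
    refine (Finset.sum_le_sum fun i hi => ?_).trans
      (Finset.sum_le_sum_of_subset_of_nonneg (Finset.erase_subset _ _) fun _ _ _ => by positivity)
    have h1i : (⟨1, by omega⟩ : Fin d) ≤ i :=
      Fin.mk_le_of_le_val (Nat.pos_of_ne_zero fun h => Finset.ne_of_mem_erase hi (Fin.ext h))
    rw [mul_pow]
    exact mul_le_mul_of_nonneg_right (pow_le_pow_left₀ (ha i) (hmono h1i) 2) (sq_nonneg _)
  rw [norm_sq_diagMap, ← hsplit, EuclideanSpace.real_norm_sq_eq, Finset.mul_sum]
  linarith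

lemma projDist_diagMap_single_le (hd : 1 < d) {a : Fin d → ℝ} (ha : ∀ i, 0 ≤ a i)
    (hmono : Antitone a) (ha₀ : 0 < a ⟨0, by omega⟩) {v : E} (hv : v ⟨0, by omega⟩ ≠ 0) :
    projDist (diagMap a v) (EuclideanSpace.single ⟨0, by omega⟩ 1)
      ≤ a ⟨1, by omega⟩ * ‖v‖ / (a ⟨0, by omega⟩ * |v ⟨0, by omega⟩|) := by
  have hnum : Real.sqrt (‖diagMap a v‖ ^ 2 - (a ⟨0, by omega⟩ * v ⟨0, by omega⟩) ^ 2)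
      ≤ a ⟨1, by omega⟩ * ‖v‖ := by
    rw [Real.sqrt_le_left (mul_nonneg (ha _) (norm_nonneg v))]
    exact (norm_sq_diagMap_sub_le hd ha hmono v).trans_eq (mul_pow _ _ _).symm
  have hden : a ⟨0, by omega⟩ * |v ⟨0, by omega⟩| ≤ ‖diagMap a v‖ := by
    rw [← abs_of_pos ha₀, ← abs_mul, ← diagMap_apply, ← Real.norm_eq_abs]
    exact PiLp.norm_apply_le _ _
  rw [projDist, inner_diagMap_single, PiLp.norm_single, norm_one, one_pow, mul_one, mul_one]
  exact div_le_div₀ (mul_nonneg (ha _) (norm_nonneg v)) hnum (mul_pos ha₀ (abs_pos.mpr hv)) hden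

end Diagonal

lemma projDist_pact_le_of_lt_distToHyp {d : ℕ} (hd : 1 < d)
    {g : EuclideanSpace ℝ (Fin d) ≃ₗ[ℝ] EuclideanSpace ℝ (Fin d)}
    {k k' : EuclideanSpace ℝ (Fin d) ≃ₗᵢ[ℝ] EuclideanSpace ℝ (Fin d)} {a : Fin d → ℝ}
    (ha : ∀ i, 0 ≤ a i) (ha₀ : 0 < a ⟨0, by omega⟩) (hmono : Antitone a)
    (hg : ∀ v, g v = k' (diagMap a (k v))) {r : ℝ} (hr : 0 < r)
    {x : sphere (0 : EuclideanSpace ℝ (Fin d)) 1}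
    (hx : r < distToHyp x.1 (k.symm (EuclideanSpace.single ⟨0, by omega⟩ 1))) :
    projDist (pact g x : EuclideanSpace ℝ (Fin d)) (k' (EuclideanSpace.single ⟨0, by omega⟩ 1))
      ≤ a ⟨1, by omega⟩ / (a ⟨0, by omega⟩ * r) := by
  have hkx : ‖k x‖ = 1 := by rw [k.norm_map, norm_eq_of_mem_sphere x]
  rw [distToHyp_symm_single k _ (norm_eq_of_mem_sphere x)] at hx
  rw [projDist_pact_left, hg, projDist_map_linearIsometryEquiv]
  calc _ ≤ a ⟨1, by omega⟩ * ‖k x‖ / (a ⟨0, by omega⟩ * |k x ⟨0, by omega⟩|) :=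
        projDist_diagMap_single_le hd ha hmono ha₀ (abs_pos.mp (hr.trans hx))
    _ ≤ a ⟨1, by omega⟩ / (a ⟨0, by omega⟩ * r) := by
        rw [hkx, mul_one]
        exact div_le_div_of_nonneg_left (ha _) (mul_pos ha₀ hr)
          (mul_le_mul_of_nonneg_left hx.le ha₀.le)

theorem attracting_decomposition_of_pair
    {d : ℕ} (hd : 2 ≤ d)
    (g : EuclideanSpace ℝ (Fin d) ≃ₗ[ℝ] EuclideanSpace ℝ (Fin d))
    (k k' : EuclideanSpace ℝ (Fin d) ≃ₗᵢ[ℝ] EuclideanSpace ℝ (Fin d))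
    (a : Fin d → ℝ) (ha : ∀ i, 0 < a i)
    (hmono : ∀ i j : Fin d, i ≤ j → a j ≤ a i)
    (hg : ∀ v, g v = k' (diagMap a (k v)))
    (τ : Measure (sphere (0 : EuclideanSpace ℝ (Fin d)) 1))
    (C β : ℝ)
    -- Hölder regularity: `τ(B(W,R)) ≤ C R^β` for every projective hyperplane `W`
    (hHolder : ∀ u : EuclideanSpace ℝ (Fin d), ‖u‖ = 1 → ∀ R : ℝ, 0 ≤ R →
      τ {x | distToHyp x.1 u ≤ R} ≤ ENNReal.ofReal (C * R ^ β))
    (r : ℝ) (hr0 : 0 < r) (hr : r ≤ 1 / 2) :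
    -- `θ = τ(b(g⁻,r)ᶜ) ≤ C r^β`
    τ {x | distToHyp x.1
          (k.symm (EuclideanSpace.single (⟨0, by omega⟩ : Fin d) 1)) ≤ r}
        ≤ ENNReal.ofReal (C * r ^ β) ∧
      -- the pushforward by `g` of the normalized restriction of `τ` to `b(g⁻,r)`
      -- is supported on a set of projective diameter at most
      -- `diam B(g⁺, (σ₂(g)/σ₁(g))/r²)`
      pdiam (msupp
          ((τ {x | r < distToHyp x.1
              (k.symm (EuclideanSpace.single (⟨0, by omega⟩ : Fin d) 1))})⁻¹ •
            Measure.map (pact g)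
              (τ.restrict {x | r < distToHyp x.1
                (k.symm (EuclideanSpace.single (⟨0, by omega⟩ : Fin d) 1))})))
        ≤ pdiam {x | projDist x.1
            (k' (EuclideanSpace.single (⟨0, by omega⟩ : Fin d) 1))
              ≤ (a ⟨1, by omega⟩ / a ⟨0, by omega⟩) / r ^ 2} := by
  refine ⟨hHolder _ (by simp) r hr0.le, pdiam_mono ?_⟩
  refine msupp_smul_map_restrict_subset (continuous_pact g).measurable _ τ
    (isClosed_le (continuous_projDist_left (by simp)) continuous_const) fun x hx => ?_
  have ha₀ := ha ⟨0, by omega⟩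
  calc _ ≤ a ⟨1, by omega⟩ / (a ⟨0, by omega⟩ * r) :=
        projDist_pact_le_of_lt_distToHyp hd (fun i => (ha i).le) ha₀ hmono hg hr0 hx
    _ = (a ⟨1, by omega⟩ / a ⟨0, by omega⟩) / r := (div_div _ _ _).symm
    _ ≤ (a ⟨1, by omega⟩ / a ⟨0, by omega⟩) / r ^ 2 :=
        div_le_div_of_nonneg_left (div_pos (ha _) ha₀).le (by positivity) (by nlinarith)
end
end

section
/- There exists ε > 0 such that for any V ∈ P(R³), any u ∈ U_V and any ℓ in the ε-ball Z_V around the identity in L_V, the quantity sup over W ∈ P(V^⊥) of d(W·uℓ, W) equals sup over W ∈ P(V^⊥) of d(W·ℓ, W), and this supremum is bi-Lipschitz comparable (with constants independent of V) to the left-invariant distance d_{L_V}(ℓ, id). In particular for V = E₁ and ℓ = [[det h, 0],[n, h]] near the identity, sup_{W ∈ P(E₁^⊥)} d(Wℓ, W) ≍ d_{SL₂}(h, id) + ‖n‖. -/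
/- STATEMENT 18: There exists ε > 0 such that for any V = k⁻¹E₁ ∈ P(ℝ³)
(k orthogonal), any u ∈ U_V = k⁻¹Uk and any ℓ ∈ L_V = k⁻¹Lk within distance ε
of the identity, sup_{W ∈ P(V^⊥)} d(W·uℓ, W) = sup_{W ∈ P(V^⊥)} d(W·ℓ, W), and
this supremum is bi-Lipschitz comparable, with constants independent of V, to
the distance from ℓ to the identity in L_V (realized here by the Frobenius
distance ‖ℓ − 1‖, which near the identity is uniformly comparable to any fixed
left-invariant Riemannian metric).  In particular, for V = E₁ and
ℓ = [[det h, 0],[n, h]] near the identity, the supremum is comparable to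
d(h, id) + ‖n‖. -/

open scoped Matrix
noncomputable section

/-- Euclidean norm of a vector. -/
def en {m : ℕ} (v : Fin m → ℝ) : ℝ := Real.sqrt (∑ i, v i ^ 2)

/-- Euclidean inner product. -/
def ip {m : ℕ} (v w : Fin m → ℝ) : ℝ := ∑ i, v i * w i

/-- Projective distance `d(ℝv, ℝw) = ‖v ∧ w‖ / (‖v‖ ‖w‖)`. -/
def pd {m : ℕ} (v w : Fin m → ℝ) : ℝ :=
  Real.sqrt (en v ^ 2 * en w ^ 2 - ip v w ^ 2) / (en v * en w)

/-- The element `ℓ = [[det h, 0],[n, h]]` of the group `L ⊂ SL₃(ℝ)`. -/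
def Lmat (h : Matrix (Fin 2) (Fin 2) ℝ) (n : Fin 2 → ℝ) :
    Matrix (Fin 3) (Fin 3) ℝ :=
  !![h.det, 0, 0; n 0, h 0 0, h 0 1; n 1, h 1 0, h 1 1]

/-- Frobenius norm of a square matrix. -/
def mnorm {m : ℕ} (A : Matrix (Fin m) (Fin m) ℝ) : ℝ :=
  Real.sqrt (∑ i, ∑ j, A i j ^ 2)

def Uset : Set (Matrix (Fin 3) (Fin 3) ℝ) :=
  {m | ∃ lam x y : ℝ, 0 < lam ∧
    m = !![lam ^ 2, x, y; 0, lam⁻¹, 0; 0, 0, lam⁻¹]}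

def Lset : Set (Matrix (Fin 3) (Fin 3) ℝ) :=
  {m | ∃ (h : Matrix (Fin 2) (Fin 2) ℝ) (n : Fin 2 → ℝ),
    (h.det = 1 ∨ h.det = -1) ∧ m = Lmat h n}

/-- `sup_{W ∈ P(V^⊥)} d(W·M, W)`, where `W` ranges over projective points of row
vectors annihilating the column vector `vV` spanning `V`, acted on by right
multiplication. -/
def supMove (M : Matrix (Fin 3) (Fin 3) ℝ) (vV : Fin 3 → ℝ) : ℝ :=
  sSup {t : ℝ | ∃ w : Fin 3 → ℝ, w ≠ 0 ∧ w ⬝ᵥ vV = 0 ∧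
    t = pd (Matrix.vecMul w M) w}

lemma en_nonneg {m : ℕ} (v : Fin m → ℝ) : 0 ≤ en v := Real.sqrt_nonneg _

lemma en_sq {m : ℕ} (v : Fin m → ℝ) : en v ^ 2 = ∑ i, v i ^ 2 :=
  Real.sq_sqrt (Finset.sum_nonneg fun i _ => sq_nonneg _)

lemma en_eq_ip {m : ℕ} (v : Fin m → ℝ) : en v = Real.sqrt (ip v v) := by
  unfold en ip; congr 1; exact Finset.sum_congr rfl fun i _ => (sq (v i)) ▸ rfl

lemma en_sq_eq_ip {m : ℕ} (v : Fin m → ℝ) : en v ^ 2 = ip v v := by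
  rw [en_sq]; unfold ip; exact Finset.sum_congr rfl fun i _ => sq (v i)

lemma en_pos {m : ℕ} {v : Fin m → ℝ} (hv : v ≠ 0) : 0 < en v := by
  rcases (en_nonneg v).lt_or_eq with h | h
  · exact h
  · exfalso; apply hv
    have h2 := en_sq v
    rw [← h] at h2
    simp only [ne_eq, zero_pow, OfNat.ofNat_ne_zero, not_false_iff] at h2
    have : ∀ i, v i ^ 2 = 0 := by
      intro i
      have hle : v i ^ 2 ≤ ∑ j, v j ^ 2 :=
        Finset.single_le_sum (fun j _ => sq_nonneg (v j)) (Finset.mem_univ i)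
      nlinarith [sq_nonneg (v i)]
    funext i
    simpa using pow_eq_zero_iff (n := 2) (by norm_num) |>.mp (this i)

lemma pd_nonneg {m : ℕ} (v w : Fin m → ℝ) : 0 ≤ pd v w :=
  div_nonneg (Real.sqrt_nonneg _) (mul_nonneg (en_nonneg v) (en_nonneg w))

lemma pd_le_of {m : ℕ} {x y : Fin m → ℝ} {C : ℝ} (hC : 0 ≤ C)
    (h : en x ^ 2 * en y ^ 2 - ip x y ^ 2 ≤ C ^ 2 * (en x ^ 2 * en y ^ 2)) :
    pd x y ≤ C := by
  unfold pd
  rcases eq_or_lt_of_le (mul_nonneg (en_nonneg x) (en_nonneg y)) with h0 | h0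
  · rw [← h0, div_zero]; exact hC
  · rw [div_le_iff₀ h0]
    calc Real.sqrt (en x ^ 2 * en y ^ 2 - ip x y ^ 2)
        ≤ Real.sqrt (C ^ 2 * (en x ^ 2 * en y ^ 2)) := Real.sqrt_le_sqrt h
      _ = C * (en x * en y) := by
          rw [show C ^ 2 * (en x ^ 2 * en y ^ 2) = (C * (en x * en y))^2 by ring]
          exact Real.sqrt_sq (by positivity)

lemma le_pd {m : ℕ} {x y : Fin m → ℝ} {D : ℝ} (hD : 0 ≤ D)
    (hx : 0 < en x) (hy : 0 < en y)
    (h : D ^ 2 * (en x ^ 2 * en y ^ 2) ≤ en x ^ 2 * en y ^ 2 - ip x y ^ 2) :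
    D ≤ pd x y := by
  unfold pd
  rw [le_div_iff₀ (by positivity)]
  have hN : (0:ℝ) ≤ en x ^ 2 * en y ^ 2 - ip x y ^ 2 := by
    nlinarith [mul_nonneg (sq_nonneg D) (mul_nonneg (sq_nonneg (en x)) (sq_nonneg (en y)))]
  rw [Real.le_sqrt (by positivity) hN]
  nlinarith [h]

lemma mnorm_nonneg {m : ℕ} (A : Matrix (Fin m) (Fin m) ℝ) : 0 ≤ mnorm A := Real.sqrt_nonneg _

lemma mnorm_sq {m : ℕ} (A : Matrix (Fin m) (Fin m) ℝ) : mnorm A ^ 2 = ∑ i, ∑ j, A i j ^ 2 :=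
  Real.sq_sqrt (Finset.sum_nonneg fun i _ => Finset.sum_nonneg fun j _ => sq_nonneg _)

lemma mnorm_sq_eq_trace {m : ℕ} (A : Matrix (Fin m) (Fin m) ℝ) :
    mnorm A ^ 2 = Matrix.trace (Aᵀ * A) := by
  rw [mnorm_sq]
  unfold Matrix.trace
  rw [Finset.sum_comm]
  refine Finset.sum_congr rfl fun j _ => ?_
  simp [Matrix.diag, Matrix.mul_apply, Matrix.transpose_apply, sq]

-- invariance of mnorm under orthogonal conjugation

lemma mnorm_conj {k : Matrix (Fin 3) (Fin 3) ℝ} (hk : kᵀ * k = 1)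
    (B : Matrix (Fin 3) (Fin 3) ℝ) : mnorm (kᵀ * B * k) = mnorm B := by
  have hk' : k * kᵀ = 1 := mul_eq_one_comm.mp hk
  have h2 : mnorm (kᵀ * B * k) ^ 2 = mnorm B ^ 2 := by
    rw [mnorm_sq_eq_trace, mnorm_sq_eq_trace]
    have e1 : k * (kᵀ * (B * k)) = B * k := by
      rw [← Matrix.mul_assoc, hk', Matrix.one_mul]
    have : (kᵀ * B * k)ᵀ * (kᵀ * B * k) = kᵀ * (Bᵀ * B) * k := by
      simp only [Matrix.transpose_mul, Matrix.transpose_transpose, Matrix.mul_assoc]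
      rw [e1]
    rw [this]
    calc Matrix.trace (kᵀ * (Bᵀ * B) * k) = Matrix.trace ((kᵀ * (Bᵀ * B)) * k) := by
          noncomm_ring
      _ = Matrix.trace (k * (kᵀ * (Bᵀ * B))) := Matrix.trace_mul_comm _ _
      _ = Matrix.trace ((k * kᵀ) * (Bᵀ * B)) := by noncomm_ring
      _ = Matrix.trace (Bᵀ * B) := by rw [hk', one_mul]
  have := mnorm_nonneg (kᵀ * B * k)
  have := mnorm_nonneg B
  nlinarith

lemma ip_eq_dot {m : ℕ} (v w : Fin m → ℝ) : ip v w = v ⬝ᵥ w := rfl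

lemma ip_vecMul {k : Matrix (Fin 3) (Fin 3) ℝ} (hk' : k * kᵀ = 1) (x y : Fin 3 → ℝ) :
    ip (x ᵥ* k) (y ᵥ* k) = ip x y := by
  rw [ip_eq_dot, ip_eq_dot, ← Matrix.dotProduct_mulVec, ← Matrix.mulVec_transpose,
    Matrix.mulVec_mulVec, hk', Matrix.one_mulVec]

lemma en_vecMul_orth {k : Matrix (Fin 3) (Fin 3) ℝ} (hk' : k * kᵀ = 1) (x : Fin 3 → ℝ) :
    en (x ᵥ* k) = en x := by
  rw [en_eq_ip, en_eq_ip, ip_vecMul hk']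

lemma pd_vecMul_orth {k : Matrix (Fin 3) (Fin 3) ℝ} (hk' : k * kᵀ = 1) (x y : Fin 3 → ℝ) :
    pd (x ᵥ* k) (y ᵥ* k) = pd x y := by
  unfold pd
  rw [ip_vecMul hk', en_vecMul_orth hk', en_vecMul_orth hk']

lemma en_smul {m : ℕ} (c : ℝ) (x : Fin m → ℝ) : en (c • x) = |c| * en x := by
  unfold en
  rw [← Real.sqrt_sq_eq_abs, ← Real.sqrt_mul (sq_nonneg c)]
  congr 1
  rw [Finset.mul_sum]
  refine Finset.sum_congr rfl fun i _ => ?_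
  simp [mul_pow]

lemma ip_smul {m : ℕ} (c : ℝ) (x y : Fin m → ℝ) : ip (c • x) y = c * ip x y := by
  unfold ip
  rw [Finset.mul_sum]
  refine Finset.sum_congr rfl fun i _ => ?_
  simp [mul_assoc]

lemma pd_smul {m : ℕ} {c : ℝ} (hc : c ≠ 0) (x y : Fin m → ℝ) : pd (c • x) y = pd x y := by
  unfold pd
  rw [en_smul, ip_smul]
  have habs : (0:ℝ) < |c| := abs_pos.mpr hc
  rw [show (|c| * en x) ^ 2 * en y ^ 2 - (c * ip x y) ^ 2
      = c ^ 2 * (en x ^ 2 * en y ^ 2 - ip x y ^ 2) by rw [mul_pow, sq_abs]; ring]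
  rw [Real.sqrt_mul (sq_nonneg c), Real.sqrt_sq_eq_abs]
  rw [show |c| * en x * en y = |c| * (en x * en y) by ring]
  rw [mul_div_mul_left _ _ (ne_of_gt habs)]

lemma ip_comm {m : ℕ} (x y : Fin m → ℝ) : ip x y = ip y x := by
  unfold ip; exact Finset.sum_congr rfl fun i _ => mul_comm _ _

lemma ip_sub_left {m : ℕ} (x y z : Fin m → ℝ) : ip (x - y) z = ip x z - ip y z := by
  unfold ip
  rw [← Finset.sum_sub_distrib]
  exact Finset.sum_congr rfl fun i _ => by simp [sub_mul]

lemma ip_sub_right {m : ℕ} (z x y : Fin m → ℝ) : ip z (x - y) = ip z x - ip z y := by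
  unfold ip
  rw [← Finset.sum_sub_distrib]
  exact Finset.sum_congr rfl fun i _ => by simp [mul_sub]

lemma N_eq {m : ℕ} (x y : Fin m → ℝ) :
    en x ^ 2 * en y ^ 2 - ip x y ^ 2
      = en (x - y) ^ 2 * en x ^ 2 - ip (x - y) x ^ 2 := by
  have h1 : en (x - y) ^ 2 = ip x x - 2 * ip x y + ip y y := by
    rw [en_sq_eq_ip, ip_sub_left, ip_sub_right, ip_sub_right, ip_comm y x]
    ring
  rw [en_sq_eq_ip, en_sq_eq_ip, h1, ip_sub_left, ip_comm y x]
  ring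

lemma cs3 (a b c x y z : ℝ) : (x*a + y*b + z*c)^2 ≤ (x^2+y^2+z^2)*(a^2+b^2+c^2) := by
  nlinarith [sq_nonneg (x*b - y*a), sq_nonneg (x*c - z*a), sq_nonneg (y*c - z*b)]

lemma en_vecMul_le (w : Fin 3 → ℝ) (M : Matrix (Fin 3) (Fin 3) ℝ) :
    en (w ᵥ* M) ^ 2 ≤ mnorm M ^ 2 * en w ^ 2 := by
  rw [en_sq, en_sq, mnorm_sq]
  simp only [Matrix.vecMul, dotProduct, Fin.sum_univ_three]
  nlinarith [cs3 (M 0 0) (M 1 0) (M 2 0) (w 0) (w 1) (w 2),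
    cs3 (M 0 1) (M 1 1) (M 2 1) (w 0) (w 1) (w 2),
    cs3 (M 0 2) (M 1 2) (M 2 2) (w 0) (w 1) (w 2)]

/-- pointwise displacement bound -/

lemma pd_move_le (w : Fin 3 → ℝ) (M : Matrix (Fin 3) (Fin 3) ℝ) :
    pd (w ᵥ* M) w ≤ mnorm (M - 1) := by
  apply pd_le_of (mnorm_nonneg _)
  have hd : w ᵥ* M - w = w ᵥ* (M - 1) := by
    rw [Matrix.vecMul_sub, Matrix.vecMul_one]
  have h1 := N_eq (w ᵥ* M) w
  rw [hd] at h1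
  have h2 := en_vecMul_le w (M - 1)
  have h3 := en_vecMul_le w M
  have h4 : (0:ℝ) ≤ ip (w ᵥ* (M-1)) (w ᵥ* M) ^ 2 := sq_nonneg _
  have h5 : (0:ℝ) ≤ en (w ᵥ* M) ^ 2 := sq_nonneg _
  have h6 : (0:ℝ) ≤ en (w ᵥ* (M-1)) ^ 2 := sq_nonneg _
  nlinarith [mul_le_mul_of_nonneg_right h2 h5]

lemma supMove_conj {k : Matrix (Fin 3) (Fin 3) ℝ} (hk : kᵀ * k = 1)
    (M : Matrix (Fin 3) (Fin 3) ℝ) :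
    supMove (k⁻¹ * M * k) (kᵀ.mulVec ![1, 0, 0]) = supMove M ![1, 0, 0] := by
  have hk' : k * kᵀ = 1 := mul_eq_one_comm.mp hk
  have hinv : k⁻¹ = kᵀ := Matrix.inv_eq_left_inv hk
  unfold supMove
  congr 1
  ext t
  constructor
  · rintro ⟨w, hw0, hwV, rfl⟩
    refine ⟨w ᵥ* kᵀ, ?_, ?_, ?_⟩
    · intro h0
      apply hw0
      have h1 : (w ᵥ* kᵀ) ᵥ* k = (0 : Fin 3 → ℝ) ᵥ* k := by rw [h0]
      rw [Matrix.vecMul_vecMul, hk, Matrix.vecMul_one, Matrix.zero_vecMul] at h1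
      exact h1
    · rw [Matrix.dotProduct_mulVec] at hwV
      exact hwV
    · rw [← pd_vecMul_orth hk' ((w ᵥ* kᵀ) ᵥ* M) (w ᵥ* kᵀ)]
      rw [Matrix.vecMul_vecMul, Matrix.vecMul_vecMul, Matrix.vecMul_vecMul, hk,
        Matrix.vecMul_one, hinv, Matrix.mul_assoc]
  · rintro ⟨w, hw0, hwV, rfl⟩
    refine ⟨w ᵥ* k, ?_, ?_, ?_⟩
    · intro h0
      apply hw0
      have h1 : (w ᵥ* k) ᵥ* kᵀ = (0 : Fin 3 → ℝ) ᵥ* kᵀ := by rw [h0]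
      rw [Matrix.vecMul_vecMul, hk', Matrix.vecMul_one, Matrix.zero_vecMul] at h1
      exact h1
    · rw [Matrix.dotProduct_mulVec, Matrix.vecMul_vecMul, hk', Matrix.vecMul_one]
      exact hwV
    · rw [← pd_vecMul_orth hk' (w ᵥ* M) w]
      rw [Matrix.vecMul_vecMul, Matrix.vecMul_vecMul, hinv]
      congr 2
      rw [show kᵀ * M * k = kᵀ * (M * k) from Matrix.mul_assoc _ _ _,
        ← Matrix.mul_assoc k kᵀ (M * k), hk', Matrix.one_mul]

lemma dot_e1 (w : Fin 3 → ℝ) : w ⬝ᵥ ![1, 0, 0] = w 0 := by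
  simp [dotProduct, Fin.sum_univ_three]

lemma supMove_u0 {u : Matrix (Fin 3) (Fin 3) ℝ} (hu : u ∈ Uset)
    (M : Matrix (Fin 3) (Fin 3) ℝ) :
    supMove (u * M) ![1, 0, 0] = supMove M ![1, 0, 0] := by
  obtain ⟨lam, x, y, hlam, rfl⟩ := hu
  unfold supMove
  congr 1
  ext t
  have key : ∀ w : Fin 3 → ℝ, w ⬝ᵥ ![1, 0, 0] = 0 →
      pd (w ᵥ* (!![lam ^ 2, x, y; 0, lam⁻¹, 0; 0, 0, lam⁻¹] * M)) w = pd (w ᵥ* M) w := by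
    intro w hw
    rw [dot_e1] at hw
    have h1 : w ᵥ* !![lam ^ 2, x, y; 0, lam⁻¹, 0; 0, 0, lam⁻¹] = lam⁻¹ • w := by
      funext j
      simp only [Pi.smul_apply, smul_eq_mul]
      fin_cases j <;>
        simp [-mul_eq_zero, Matrix.vecMul, dotProduct, Fin.sum_univ_three, hw,
          mul_comm, Matrix.vecHead, Matrix.vecTail, Function.comp]
    rw [← Matrix.vecMul_vecMul, h1, Matrix.smul_vecMul,
      pd_smul (inv_ne_zero (ne_of_gt hlam))]
  constructor
  · rintro ⟨w, hw0, hwV, rfl⟩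
    exact ⟨w, hw0, hwV, key w hwV⟩
  · rintro ⟨w, hw0, hwV, rfl⟩
    exact ⟨w, hw0, hwV, (key w hwV).symm⟩

lemma en_sq_add_le {m : ℕ} (a b : Fin m → ℝ) : en (a + b) ^ 2 ≤ 2 * en a ^ 2 + 2 * en b ^ 2 := by
  rw [en_sq, en_sq, en_sq, Finset.mul_sum, Finset.mul_sum, ← Finset.sum_add_distrib]
  refine Finset.sum_le_sum fun i _ => ?_
  simp only [Pi.add_apply]
  nlinarith [sq_nonneg (a i - b i)]

lemma pd_lower_gen (M : Matrix (Fin 3) (Fin 3) ℝ) (hM : mnorm (M - 1) ^ 2 ≤ 1/64)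
    (p q : ℝ) (hpq : 0 < p ^ 2 + q ^ 2) (D : ℝ) (hD : 0 ≤ D)
    (hkey : D ^ 2 * (4 * (p ^ 2 + q ^ 2) ^ 2) ≤
      ((![0,p,q] ᵥ* M) 0) ^ 2 * (p ^ 2 + q ^ 2)
        + ((![0,p,q] ᵥ* M) 1 * q - (![0,p,q] ᵥ* M) 2 * p) ^ 2) :
    D ≤ pd (![0,p,q] ᵥ* M) ![0,p,q] := by
  set w : Fin 3 → ℝ := ![0,p,q] with hw
  set x : Fin 3 → ℝ := w ᵥ* M with hx
  set d : Fin 3 → ℝ := w ᵥ* (M - 1) with hdd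
  have hxd : x = w + d := by
    rw [hx, hdd, Matrix.vecMul_sub, Matrix.vecMul_one]; abel
  have henw : en w ^ 2 = p ^ 2 + q ^ 2 := by
    rw [en_sq, Fin.sum_univ_three]; simp [hw]
  have hd2 : en d ^ 2 ≤ (1/64) * en w ^ 2 := by
    calc en d ^ 2 ≤ mnorm (M-1) ^ 2 * en w ^ 2 := en_vecMul_le w (M - 1)
      _ ≤ (1/64) * en w ^ 2 := by nlinarith [sq_nonneg (en w)]
  have hx2 : en x ^ 2 ≤ 4 * en w ^ 2 := by
    calc en x ^ 2 ≤ 2 * en w ^ 2 + 2 * en d ^ 2 := hxd ▸ en_sq_add_le w d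
      _ ≤ 4 * en w ^ 2 := by nlinarith
  have hw2 : en w ^ 2 ≤ 2 * en x ^ 2 + 2 * en d ^ 2 := by
    have : w = x + (-1 : ℝ) • d := by rw [hxd]; funext i; simp
    calc en w ^ 2 ≤ 2 * en x ^ 2 + 2 * en ((-1:ℝ) • d) ^ 2 := this ▸ en_sq_add_le x _
      _ = 2 * en x ^ 2 + 2 * en d ^ 2 := by rw [en_smul]; norm_num
  have hxpos : 0 < en x := by
    rcases (en_nonneg x).lt_or_eq with h | h
    · exact h
    · exfalso; rw [← h] at hw2; nlinarith
  have hwpos : 0 < en w := by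
    rcases (en_nonneg w).lt_or_eq with h | h
    · exact h
    · exfalso; rw [← h] at henw; nlinarith
  apply le_pd hD hxpos hwpos
  have hexp_x : en x ^ 2 = x 0 ^ 2 + x 1 ^ 2 + x 2 ^ 2 := by
    rw [en_sq, Fin.sum_univ_three]
  have hexp_ip : ip x w = x 1 * p + x 2 * q := by
    unfold ip
    rw [Fin.sum_univ_three]; simp [hw]
  have hN : en x ^ 2 * en w ^ 2 - ip x w ^ 2
      = x 0 ^ 2 * (p ^ 2 + q ^ 2) + (x 1 * q - x 2 * p) ^ 2 := by
    rw [hexp_x, hexp_ip, henw]; ring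
  rw [hN, henw]
  have hx2' : en x ^ 2 ≤ 4 * (p ^ 2 + q ^ 2) := by rw [henw] at hx2; linarith
  nlinarith [mul_le_mul_of_nonneg_left hx2'
    (mul_nonneg (sq_nonneg D) (le_of_lt hpq)), hkey]

lemma bddAbove_supSet (M : Matrix (Fin 3) (Fin 3) ℝ) (vV : Fin 3 → ℝ) :
    BddAbove {t : ℝ | ∃ w : Fin 3 → ℝ, w ≠ 0 ∧ w ⬝ᵥ vV = 0 ∧
      t = pd (Matrix.vecMul w M) w} := by
  refine ⟨mnorm (M - 1), ?_⟩
  rintro t ⟨w, hw0, hwV, rfl⟩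
  exact pd_move_le w M

lemma pd_le_supMove (M : Matrix (Fin 3) (Fin 3) ℝ) (p q : ℝ) (hpq : 0 < p ^ 2 + q ^ 2) :
    pd (![0,p,q] ᵥ* M) ![0,p,q] ≤ supMove M ![1, 0, 0] := by
  apply le_csSup (bddAbove_supSet M _)
  refine ⟨![0,p,q], ?_, ?_, rfl⟩
  · intro h0
    have h1 : (![0,p,q] : Fin 3 → ℝ) 1 = 0 := by rw [h0]; rfl
    have h2 : (![0,p,q] : Fin 3 → ℝ) 2 = 0 := by rw [h0]; rfl
    simp at h1 h2
    nlinarith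
  · rw [dot_e1]; rfl

lemma supMove_le (M : Matrix (Fin 3) (Fin 3) ℝ) :
    supMove M ![1, 0, 0] ≤ mnorm (M - 1) := by
  apply Real.sSup_le _ (mnorm_nonneg _)
  rintro t ⟨w, hw0, hwV, rfl⟩
  exact pd_move_le w M

lemma mnorm_Lmat_sq (h : Matrix (Fin 2) (Fin 2) ℝ) (n : Fin 2 → ℝ) :
    mnorm (Lmat h n - 1) ^ 2 = (h.det - 1) ^ 2 + en n ^ 2 + mnorm (h - 1) ^ 2 := by
  rw [mnorm_sq, mnorm_sq, en_sq]
  simp [Lmat, Matrix.sub_apply, Matrix.one_apply, Fin.sum_univ_three, Fin.sum_univ_two]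
  ring

lemma en_sq_two (n : Fin 2 → ℝ) : en n ^ 2 = n 0 ^ 2 + n 1 ^ 2 := by
  rw [en_sq, Fin.sum_univ_two]

lemma mnorm_sq_two (h : Matrix (Fin 2) (Fin 2) ℝ) :
    mnorm (h - 1) ^ 2 = (h 0 0 - 1)^2 + (h 0 1)^2 + (h 1 0)^2 + (h 1 1 - 1)^2 := by
  rw [mnorm_sq]
  simp [Fin.sum_univ_two, Matrix.sub_apply, Matrix.one_apply]
  ring

lemma vecMul_Lmat (h : Matrix (Fin 2) (Fin 2) ℝ) (n : Fin 2 → ℝ) (p q : ℝ) :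
    (![0,p,q] ᵥ* Lmat h n) 0 = p * n 0 + q * n 1
    ∧ (![0,p,q] ᵥ* Lmat h n) 1 = p * h 0 0 + q * h 1 0
    ∧ (![0,p,q] ᵥ* Lmat h n) 2 = p * h 0 1 + q * h 1 1 := by
  refine ⟨?_, ?_, ?_⟩ <;>
    simp [Lmat, Matrix.vecMul, dotProduct, Fin.sum_univ_three,
      Matrix.vecHead, Matrix.vecTail, Function.comp]

set_option maxHeartbeats 1600000 in
lemma key_lower (h : Matrix (Fin 2) (Fin 2) ℝ) (n : Fin 2 → ℝ) (hdet : h.det = 1)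
    (hsm : mnorm (Lmat h n - 1) < 1/8) :
    (mnorm (h - 1) + en n) / 32 ≤ supMove (Lmat h n) ![1, 0, 0] := by
  have hA : 0 ≤ mnorm (h - 1) := mnorm_nonneg _
  have hN : 0 ≤ en n := en_nonneg _
  have hM : mnorm (Lmat h n - 1) ^ 2 ≤ 1/64 := by nlinarith [mnorm_nonneg (Lmat h n - 1)]
  have hAN : en n ^ 2 + mnorm (h - 1) ^ 2 ≤ 1/64 := by
    have := mnorm_Lmat_sq h n
    rw [hdet] at this
    nlinarith
  by_cases hc : mnorm (h - 1) ≤ en n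
  · -- use w = (0, n)
    rcases hN.lt_or_eq with hN0 | hN0
    · have hnsq := en_sq_two n
      have hpq : 0 < n 0 ^ 2 + n 1 ^ 2 := by nlinarith
      have hD : (0:ℝ) ≤ en n / 8 := by linarith
      have hkey : (en n / 8) ^ 2 * (4 * (n 0 ^ 2 + n 1 ^ 2) ^ 2) ≤
          ((![0, n 0, n 1] ᵥ* Lmat h n) 0) ^ 2 * (n 0 ^ 2 + n 1 ^ 2)
            + ((![0, n 0, n 1] ᵥ* Lmat h n) 1 * n 1
                - (![0, n 0, n 1] ᵥ* Lmat h n) 2 * n 0) ^ 2 := by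
        obtain ⟨Z, hZ⟩ : ∃ z, z = (![0, n 0, n 1] ᵥ* Lmat h n) 1 * n 1
            - (![0, n 0, n 1] ᵥ* Lmat h n) 2 * n 0 := ⟨_, rfl⟩
        rw [(vecMul_Lmat h n (n 0) (n 1)).1, ← hZ]
        nlinarith [sq_nonneg Z, sq_nonneg (n 0 ^ 2 + n 1 ^ 2)]
      have hle := pd_lower_gen (Lmat h n) hM (n 0) (n 1) hpq (en n / 8) hD hkey
      have := pd_le_supMove (Lmat h n) (n 0) (n 1) hpq
      have hfin : (mnorm (h - 1) + en n) / 32 ≤ en n / 8 := by linarith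
      linarith
    · -- en n = 0, hence both zero
      have hA0 : mnorm (h - 1) = 0 := le_antisymm (hN0 ▸ hc) hA
      rw [hA0, ← hN0]
      norm_num
      calc (0:ℝ) ≤ pd (![0,1,0] ᵥ* Lmat h n) ![0,1,0] := pd_nonneg _ _
        _ ≤ supMove (Lmat h n) ![1, 0, 0] := pd_le_supMove _ 1 0 (by norm_num)
  · -- mnorm (h-1) > en n; quadratic form argument
    push_neg at hc
    obtain ⟨A, hAdef⟩ : ∃ z, z = mnorm (h - 1) := ⟨_, rfl⟩
    rw [← hAdef] at hA hAN hc
    have hApos : 0 < A := lt_of_le_of_lt hN hc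
    have hAle : A ≤ 1/8 := by nlinarith
    obtain ⟨a', ha'⟩ : ∃ z, z = h 0 0 - 1 := ⟨_, rfl⟩
    obtain ⟨b', hb'⟩ : ∃ z, z = h 0 1 := ⟨_, rfl⟩
    obtain ⟨c', hc'⟩ : ∃ z, z = h 1 0 := ⟨_, rfl⟩
    obtain ⟨d', hd'⟩ : ∃ z, z = h 1 1 - 1 := ⟨_, rfl⟩
    have hA2 : A ^ 2 = a' ^ 2 + b' ^ 2 + c' ^ 2 + d' ^ 2 := by
      rw [hAdef, mnorm_sq_two, ha', hb', hc', hd']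
    have hs : a' + d' = b' * c' - a' * d' := by
      have hdd := hdet
      rw [Matrix.det_fin_two] at hdd
      rw [ha', hb', hc', hd']
      linear_combination hdd
    obtain ⟨p, q, hpq1, hQ⟩ : ∃ p q : ℝ, (p ^ 2 + q ^ 2 = 1 ∨ p ^ 2 + q ^ 2 = 2) ∧
        (A/8) ^ 2 * (4 * (p ^ 2 + q ^ 2) ^ 2) ≤
          (p * q * (a' - d') + q ^ 2 * c' - p ^ 2 * b') ^ 2 := by
      by_contra hcon
      push_neg at hcon
      have h1 := hcon 1 0 (by norm_num)
      have h2 := hcon 0 1 (by norm_num)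
      have h3 := hcon 1 1 (by norm_num)
      have h4 := hcon 1 (-1) (by norm_num)
      norm_num at h1 h2 h3 h4
      have hb1 : 2 * (b' * c' - a' * d') ≤ A ^ 2 := by
        nlinarith [sq_nonneg (b' - c'), sq_nonneg (a' + d')]
      have hb2 : -(A ^ 2) ≤ 2 * (b' * c' - a' * d') := by
        nlinarith [sq_nonneg (b' + c'), sq_nonneg (a' - d')]
      have hs2 : (a' + d') ^ 2 ≤ A ^ 4 / 4 := by
        rw [hs]
        nlinarith [mul_nonneg (by linarith : (0:ℝ) ≤ A ^ 2 - 2 * (b' * c' - a' * d'))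
          (by linarith : (0:ℝ) ≤ A ^ 2 + 2 * (b' * c' - a' * d'))]
      have hA4 : A ^ 4 ≤ A ^ 2 / 64 := by nlinarith
      have ht : (a' - d') ^ 2 < A ^ 2 / 2 := by nlinarith [h3, h4, sq_nonneg (c' - b')]
      nlinarith [hA2, hs2, hA4, ht, h1, h2, sq_nonneg (a' + d'), sq_nonneg A, hApos]
    have hpq : 0 < p ^ 2 + q ^ 2 := by rcases hpq1 with h' | h' <;> rw [h'] <;> norm_num
    have hD : (0:ℝ) ≤ A / 8 := by linarith
    have hkey : (A/8) ^ 2 * (4 * (p ^ 2 + q ^ 2) ^ 2) ≤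
        ((![0, p, q] ᵥ* Lmat h n) 0) ^ 2 * (p ^ 2 + q ^ 2)
          + ((![0, p, q] ᵥ* Lmat h n) 1 * q - (![0, p, q] ᵥ* Lmat h n) 2 * p) ^ 2 := by
      rw [(vecMul_Lmat h n p q).2.1, (vecMul_Lmat h n p q).2.2]
      obtain ⟨X, hX⟩ : ∃ z, z = (![0, p, q] ᵥ* Lmat h n) 0 := ⟨_, rfl⟩
      rw [← hX]
      have hQeq : (p * h 0 0 + q * h 1 0) * q - (p * h 0 1 + q * h 1 1) * p
          = p * q * (a' - d') + q ^ 2 * c' - p ^ 2 * b' := by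
        rw [ha', hb', hc', hd']; ring
      rw [hQeq]
      nlinarith [hQ, mul_nonneg (sq_nonneg X) (le_of_lt hpq)]
    have hle := pd_lower_gen (Lmat h n) hM p q hpq (A/8) hD hkey
    have := pd_le_supMove (Lmat h n) p q hpq
    have hfin : (A + en n) / 32 ≤ A / 8 := by linarith
    rw [← hAdef]
    linarith


lemma det_one {h : Matrix (Fin 2) (Fin 2) ℝ} {n : Fin 2 → ℝ}
    (hd : h.det = 1 ∨ h.det = -1) (hsm : mnorm (Lmat h n - 1) < 1/8) : h.det = 1 := by
  rcases hd with hd | hd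
  · exact hd
  · exfalso
    have h1 := mnorm_Lmat_sq h n
    rw [hd] at h1
    have h2 : mnorm (Lmat h n - 1) ^ 2 ≤ 1/64 := by nlinarith [mnorm_nonneg (Lmat h n - 1)]
    nlinarith [sq_nonneg (en n), sq_nonneg (mnorm (h - 1))]

lemma mnorm_le_sum {h : Matrix (Fin 2) (Fin 2) ℝ} {n : Fin 2 → ℝ} (hdet : h.det = 1) :
    mnorm (Lmat h n - 1) ≤ mnorm (h - 1) + en n := by
  have h1 := mnorm_Lmat_sq h n
  rw [hdet] at h1
  nlinarith [mnorm_nonneg (Lmat h n - 1), mnorm_nonneg (h - 1), en_nonneg n,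
    mul_nonneg (mnorm_nonneg (h - 1)) (en_nonneg n)]

theorem displacement_comparable_to_distance :
    ∃ ε : ℝ, 0 < ε ∧ ∃ c C : ℝ, 0 < c ∧ 0 < C ∧
      (∀ k : Matrix (Fin 3) (Fin 3) ℝ, kᵀ * k = 1 →
        ∀ u₀ ∈ Uset, ∀ l₀ ∈ Lset,
          mnorm (k⁻¹ * l₀ * k - 1) < ε →
          (supMove ((k⁻¹ * u₀ * k) * (k⁻¹ * l₀ * k)) (kᵀ.mulVec ![1, 0, 0])
              = supMove (k⁻¹ * l₀ * k) (kᵀ.mulVec ![1, 0, 0])) ∧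
            c * mnorm (k⁻¹ * l₀ * k - 1)
              ≤ supMove (k⁻¹ * l₀ * k) (kᵀ.mulVec ![1, 0, 0]) ∧
            supMove (k⁻¹ * l₀ * k) (kᵀ.mulVec ![1, 0, 0])
              ≤ C * mnorm (k⁻¹ * l₀ * k - 1)) ∧
      -- in particular, for `V = E₁`:
      (∀ (h : Matrix (Fin 2) (Fin 2) ℝ) (n : Fin 2 → ℝ),
        (h.det = 1 ∨ h.det = -1) →
        mnorm (Lmat h n - 1) < ε →
        c * (mnorm (h - 1) + en n) ≤ supMove (Lmat h n) ![1, 0, 0] ∧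
          supMove (Lmat h n) ![1, 0, 0] ≤ C * (mnorm (h - 1) + en n)) := by
  refine ⟨1/8, by norm_num, 1/32, 2, by norm_num, by norm_num, ?_, ?_⟩
  · intro k hk u₀ hu l₀ hl hsmall
    have hk' : k * kᵀ = 1 := mul_eq_one_comm.mp hk
    have hinv : k⁻¹ = kᵀ := Matrix.inv_eq_left_inv hk
    have hconj : k⁻¹ * l₀ * k - 1 = kᵀ * (l₀ - 1) * k := by
      rw [hinv, Matrix.mul_sub, Matrix.sub_mul, Matrix.mul_one, hk]
    have hmn : mnorm (k⁻¹ * l₀ * k - 1) = mnorm (l₀ - 1) := by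
      rw [hconj, mnorm_conj hk]
    obtain ⟨h, n, hd, rfl⟩ := hl
    have hsm : mnorm (Lmat h n - 1) < 1/8 := by rw [← hmn]; exact hsmall
    have hdet : h.det = 1 := det_one hd hsm
    refine ⟨?_, ?_, ?_⟩
    · have hprod : (k⁻¹ * u₀ * k) * (k⁻¹ * Lmat h n * k) = k⁻¹ * (u₀ * Lmat h n) * k := by
        rw [hinv]
        calc kᵀ * u₀ * k * (kᵀ * Lmat h n * k)
            = kᵀ * u₀ * (k * kᵀ) * (Lmat h n * k) := by
              simp only [Matrix.mul_assoc]
          _ = kᵀ * (u₀ * Lmat h n) * k := by rw [hk']; simp only [Matrix.mul_one,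
              Matrix.mul_assoc]
      rw [hprod, supMove_conj hk, supMove_conj hk, supMove_u0 hu]
    · rw [hmn, supMove_conj hk]
      have := key_lower h n hdet hsm
      have := mnorm_le_sum (n := n) hdet
      linarith
    · rw [hmn, supMove_conj hk]
      have h1 := supMove_le (Lmat h n)
      have := mnorm_nonneg (Lmat h n - 1)
      linarith
  · intro h n hd hsm
    have hdet : h.det = 1 := det_one hd hsm
    constructor
    · have := key_lower h n hdet hsm
      linarith
    · have h1 := supMove_le (Lmat h n)
      have h2 := mnorm_le_sum (n := n) hdet
      have := mnorm_nonneg (h - 1)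
      have := en_nonneg n
      linarith
end
end
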